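/- arXiv:math/0601634 — 3 statements merged into one kernel-verified Lean document; each statement's English description precedes it below -/
import Mathlib

section
/- The ratio of two last multipliers of a vector field A (with nowhere-vanishing denominator) is a first integral of A. -/
theorem Derivation.map_mul_invOf_eq_zero_of_map_eq_mul {S A : Type*} [CommRing S] [CommRing A]
    [Algebra S A] (D : Derivation S A A) {a b c : A} [Invertible b]
    (ha : D a = c * a) (hb : D b = c * b) : D (a * ⅟b) = 0 := by
  rw [D.leibniz, D.leibniz_invOf, hb, ha, smul_eq_mul, smul_eq_mul, smul_eq_mul]
  linear_combination (-(a * c * ⅟b)) * invOf_mul_self b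

/-- The ratio of two last multipliers of `A` (nowhere-vanishing, hence
invertible, denominator) is a first integral of `A`. -/
theorem ratio_of_last_multipliers_is_first_integral
    (R : Type*) [CommRing R] [Algebra ℝ R]
    (A : Derivation ℝ R R) (divA : R)
    (m₁ m₂ : R) [Invertible m₂]
    (h₁ : A m₁ + m₁ * divA = 0)
    (h₂ : A m₂ + m₂ * divA = 0) :
    A (m₁ * ⅟m₂) = 0 :=
  A.map_mul_invOf_eq_zero_of_map_eq_mul (c := -divA)
    (by linear_combination h₁) (by linear_combination h₂)
end

section
/- For a fixed smooth function m, the set of vector fields admitting m as a last multiplier is a Lie subalgebra of the Lie algebra of vector fields: if X(m) + m·div(X) = 0 and Y(m) + m·div(Y) = 0, then [X,Y](m) + m·div([X,Y]) = 0. -/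
theorem Derivation.commutator_apply_eq_neg_mul_of_apply_eq_neg_mul
    {R A : Type*} [CommRing R] [CommRing A] [Algebra R A]
    {X Y : Derivation R A A} {m a b : A}
    (hX : X m = -(m * a)) (hY : Y m = -(m * b)) :
    ⁅X, Y⁆ m = -(m * (X b - Y a)) := by
  rw [Derivation.commutator_apply, hX, hY, map_neg, map_neg, Derivation.leibniz,
    Derivation.leibniz, hX, hY, smul_eq_mul, smul_eq_mul, smul_eq_mul, smul_eq_mul]
  ring

/-- For fixed `m`, the set of vector fields admitting `m` as last
multiplier is a Lie subalgebra: if `X(m) + m·div(X) = 0` and `Y(m) + m·div(Y) = 0`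
then `[X,Y](m) + m·div([X,Y]) = 0`, using `div([X,Y]) = X(div Y) - Y(div X)`. -/
theorem vector_fields_with_fixed_last_multiplier_lie_subalgebra
    (R : Type*) [CommRing R] [Algebra ℝ R]
    (div : Derivation ℝ R R → R)
    (hdivbr : ∀ X Y : Derivation ℝ R R, div ⁅X, Y⁆ = X (div Y) - Y (div X))
    (m : R) (X Y : Derivation ℝ R R)
    (hX : X m + m * div X = 0)
    (hY : Y m + m * div Y = 0) :
    ⁅X, Y⁆ m + m * div ⁅X, Y⁆ = 0 := by
  rw [Derivation.commutator_apply_eq_neg_mul_of_apply_eq_neg_mul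
      (eq_neg_of_add_eq_zero_left hX) (eq_neg_of_add_eq_zero_left hY),
    hdivbr, neg_add_cancel]
end

section
/- On a Riemannian manifold, if u is a last multiplier of ∇m and m is a last multiplier of ∇u, then u·m is a harmonic function; in particular, u is a last multiplier of its own gradient ∇u if and only if u² is harmonic. -/
theorem isUnit_two_of_algebra_real (R : Type*) [Semiring R] [Algebra ℝ R] : IsUnit (2 : R) := by
  simpa only [map_ofNat] using
    (isUnit_iff_ne_zero.mpr two_ne_zero : IsUnit (2 : ℝ)).map (algebraMap ℝ R)

section CarreDuChamp

variable {R : Type*} [CommRing R] {Δ : R → R} {G : R → R → R}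

/-- Adding the two multiplier defects cancels the cross terms `u Δm` and `m Δu` of the
polarization identity, leaving only `Δ(um)`. -/
theorem multiplier_defect_add_eq (h2 : IsUnit (2 : R))
    (hG : ∀ f g : R, 2 * G f g = Δ (f * g) - f * Δ g - g * Δ f) (u m : R) :
    (u * Δ m + G m u) + (m * Δ u + G u m) = Δ (u * m) := by
  apply h2.mul_left_cancel
  linear_combination hG m u + hG u m + (congrArg Δ (mul_comm m u) : Δ (m * u) = Δ (u * m))

theorem harmonic_mul_of_multiplier (h2 : IsUnit (2 : R))
    (hG : ∀ f g : R, 2 * G f g = Δ (f * g) - f * Δ g - g * Δ f) {u m : R}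
    (hu : u * Δ m + G m u = 0) (hm : m * Δ u + G u m = 0) : Δ (u * m) = 0 := by
  rw [← multiplier_defect_add_eq h2 hG u m, hu, hm, add_zero]

theorem multiplier_self_iff_harmonic_sq (h2 : IsUnit (2 : R))
    (hG : ∀ f g : R, 2 * G f g = Δ (f * g) - f * Δ g - g * Δ f) (u : R) :
    u * Δ u + G u u = 0 ↔ Δ (u ^ 2) = 0 := by
  rw [sq, ← multiplier_defect_add_eq h2 hG u u, ← two_mul, h2.mul_right_eq_zero]

end CarreDuChamp

/-- `G f g` stands for `⟨∇f, ∇g⟩`, pinned down by the polarization identity `hG`. -/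
theorem last_multiplier_gradient_harmonic
    (R : Type*) [CommRing R] [Algebra ℝ R]
    (Δ : R →ₗ[ℝ] R)
    (G : R → R → R)
    (hG : ∀ f g : R, 2 * G f g = Δ (f * g) - f * Δ g - g * Δ f)
    (u m : R) :
    ((u * Δ m + G m u = 0 ∧ m * Δ u + G u m = 0) → Δ (u * m) = 0) ∧
    (u * Δ u + G u u = 0 ↔ Δ (u ^ 2) = 0) := by
  have h2 := isUnit_two_of_algebra_real R
  exact ⟨fun ⟨hu, hm⟩ => harmonic_mul_of_multiplier h2 hG hu hm,
    multiplier_self_iff_harmonic_sq h2 hG u⟩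
end
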